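/- Let P be a fixed subspace of type (k₁,…,k_t) in F_q^{n₁+⋯+n_t}. The number of subspaces of type (l₁,…,l_t) contained in P equals [k_t choose l_t]_q · ∏_{j=1}^{t−1} q^{(l_j−l_{j+1})(k_{j+1}−l_{j+1})} [k_j−k_{j+1} choose l_j−l_{j+1}]_q, provided 0 ≤ l_i−l_{i+1} ≤ k_i−k_{i+1} ≤ n_i for 1 ≤ i ≤ t−1 and 0 ≤ l_t ≤ k_t ≤ n_t; this count is independent of the choice of P. -/

import Mathlib

/-- Gaussian binomial coefficient, via the q-Pascal recursion. -/
def gaussBinom (q : ℕ) : ℕ → ℕ → ℕ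
  | _, 0 => 1
  | 0, _ + 1 => 0
  | m + 1, i + 1 => gaussBinom q m i + q ^ (i + 1) * gaussBinom q m (i + 1)

/-- The subspace of `F^N` spanned by the standard basis vectors `e_j` with `c ≤ j`. -/
def lastSpan (F : Type) [Field F] (N c : ℕ) : Submodule F (Fin N → F) :=
  Submodule.span F {v | ∃ j : Fin N, c ≤ (j : ℕ) ∧ v = Pi.single j 1}

/-- `P` is a subspace of type `(k 0, k 1, …, k (t-1))` of `F_q^{n 0 + ⋯ + n (t-1)}`. -/
def IsTypeP (F : Type) [Field F] (t : ℕ) (n k : ℕ → ℕ)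
    (P : Submodule F (Fin (∑ m ∈ Finset.range t, n m) → F)) : Prop :=
  Module.finrank F P = k 0 ∧
    ∀ i, 1 ≤ i → i < t →
      Module.finrank F
        ↥(P ⊓ lastSpan F (∑ m ∈ Finset.range t, n m) (∑ j ∈ Finset.range i, n j)) = k i

/-!
Intersecting `P` with the flag `E_1 ⊇ E_2 ⊇ ⋯` gives a flag `W 0 = P ⊇ W 1 ⊇ ⋯`, and a subspace
`Q ≤ P` of type `l` is a subspace of `W 0` of dimension `l 0` whose trace `R = Q ∩ W 1` has the
shifted type `(l 1, l 2, …)`. For fixed `R`, passing to `W 0 / R` identifies the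
possible `Q` with the `(l 0 - l 1)`-dimensional subspaces of `W 0 / R` meeting `W 1 / R` trivially.
There are `q ^ (d b) [a - b, d]_q` such `d`-dimensional subspaces of an `a`-dimensional space
avoiding a `b`-dimensional one, by counting the `d`-tuples that are linearly independent modulo
the `b`-dimensional subspace in two ways. Induction along the flag gives the product formula.
-/

open Module Submodule

theorem gaussBinom_mul_prod_int (q m d : ℕ) :
    (gaussBinom q m d : ℤ) * ∏ i ∈ Finset.range d, ((q : ℤ) ^ d - q ^ i) =
      ∏ i ∈ Finset.range d, ((q : ℤ) ^ m - q ^ i) := by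
  have prod_succ (s d : ℕ) : ∏ i ∈ Finset.range (d + 1), ((q : ℤ) ^ (s + 1) - q ^ i) =
      (q ^ (s + 1) - 1) * q ^ d * ∏ i ∈ Finset.range d, ((q : ℤ) ^ s - q ^ i) := by
    have factor (i : ℕ) : (q : ℤ) ^ (s + 1) - q ^ (i + 1) = q * (q ^ s - q ^ i) := by ring
    simp only [Finset.prod_range_succ', factor, Finset.prod_mul_distrib, Finset.prod_const,
      Finset.card_range]
    ring
  induction m generalizing d with
  | zero => cases d <;> simp [gaussBinom, Finset.prod_range_succ']
  | succ m ih =>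
    cases d with
    | zero => simp [gaussBinom]
    | succ d =>
      have h₁ := ih d
      have h₂ := ih (d + 1)
      rw [prod_succ] at h₂ ⊢
      rw [Finset.prod_range_succ] at h₂
      rw [prod_succ, gaussBinom]
      push_cast
      linear_combination ((q : ℤ) ^ (d + 1) - 1) * q ^ d * h₁ + (q : ℤ) ^ (d + 1) * h₂

theorem gaussBinom_mul_prod {q : ℕ} (hq : 1 ≤ q) {m d : ℕ} (hdm : d ≤ m) :
    gaussBinom q m d * ∏ i ∈ Finset.range d, (q ^ d - q ^ i) =
      ∏ i ∈ Finset.range d, (q ^ m - q ^ i) := by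
  have cast_prod {s : ℕ} (hs : d ≤ s) : ((∏ i ∈ Finset.range d, (q ^ s - q ^ i) : ℕ) : ℤ) =
      ∏ i ∈ Finset.range d, ((q : ℤ) ^ s - q ^ i) := by
    push_cast
    refine Finset.prod_congr rfl fun i hi => ?_
    rw [Nat.cast_sub (Nat.pow_le_pow_right hq ((Finset.mem_range.mp hi).le.trans hs))]
    norm_cast
  apply Nat.cast_injective (R := ℤ)
  rw [Nat.cast_mul, cast_prod le_rfl, cast_prod hdm]
  exact gaussBinom_mul_prod_int q m d

theorem Nat.card_eq_mul_of_card_fiber {α β : Type*} [Finite α] [Finite β] (f : α → β) {c : ℕ}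
    (h : ∀ b, Nat.card {a // f a = b} = c) : Nat.card α = Nat.card β * c := by
  have := Fintype.ofFinite β
  rw [← Nat.card_congr (Equiv.sigmaFiberEquiv f), Nat.card_sigma,
    Finset.sum_congr rfl fun b _ => h b, Finset.sum_const, Finset.card_univ, smul_eq_mul,
    Nat.card_eq_fintype_card]

section Counting

variable {F V : Type*} [Field F] [AddCommGroup V] [Module F V]

theorem inf_map_subtype_eq_iff {U W R : Submodule F V} (hRU : R ≤ U) (Q : Submodule F U) :
    Q.map U.subtype ⊓ W = R ↔ Q ⊓ W.comap U.subtype = R.comap U.subtype := by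
  rw [← (map_injective_of_injective U.injective_subtype).eq_iff, map_inf _ U.injective_subtype,
    map_comap_subtype, map_comap_subtype, inf_of_le_right hRU, ← inf_assoc,
    inf_of_le_left (map_subtype_le U Q)]

variable [Finite V]

theorem linearIndependent_mkQ_comp_and_span_eq_iff {W U : Submodule F V} (hUW : U ⊓ W = ⊥)
    {d : ℕ} (hU : finrank F U = d) (s : Fin d → V) :
    LinearIndependent F (W.mkQ ∘ s) ∧ span F (Set.range s) = U ↔
      (∀ i, s i ∈ U) ∧ LinearIndependent F s := by
  constructor
  · rintro ⟨hli, hspan⟩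
    exact ⟨fun i => hspan ▸ subset_span (Set.mem_range_self i), hli.of_comp _⟩
  · rintro ⟨hmem, hli⟩
    have hle : span F (Set.range s) ≤ U := span_le.mpr (Set.range_subset_iff.mpr hmem)
    refine ⟨(W.mkQ.linearIndependent_iff_of_disjoint ?_).mpr hli, eq_of_le_of_finrank_le hle ?_⟩
    · rw [ker_mkQ, disjoint_iff, ← le_bot_iff, ← hUW]
      exact inf_le_inf_right W hle
    · rw [finrank_span_eq_card hli, Fintype.card_fin, hU]

theorem finrank_comap_mkQ (R : Submodule F V) (Q : Submodule F (V ⧸ R)) :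
    finrank F (Q.comap R.mkQ) = finrank F Q + finrank F R := by
  have hR : R ≤ Q.comap R.mkQ := (ker_mkQ R).ge.trans (LinearMap.ker_le_comap _)
  have e := quotientQuotientEquivQuotient R _ hR
  rw [map_comap_eq_of_surjective R.mkQ_surjective] at e
  have h₁ := Q.finrank_quotient_add_finrank
  have h₂ := R.finrank_quotient_add_finrank
  have h₃ := (Q.comap R.mkQ).finrank_quotient_add_finrank
  rw [e.finrank_eq] at h₁
  omega

variable [Fintype F]

local notation "q" => Fintype.card F

theorem card_linearIndependent_mkQ_comp (W : Submodule F V) {d : ℕ}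
    (hd : d ≤ finrank F (V ⧸ W)) :
    Nat.card {s : Fin d → V // LinearIndependent F (W.mkQ ∘ s)} =
      q ^ (d * finrank F W) * ∏ i : Fin d, (q ^ finrank F (V ⧸ W) - q ^ (i : ℕ)) := by
  have : Finite (V ⧸ W) := Module.finite_of_finite F
  obtain ⟨σ, hσ⟩ := W.mkQ.exists_rightInverse_of_surjective W.range_mkQ
  have mkQ_σ (x : V ⧸ W) : W.mkQ (σ x) = x := LinearMap.congr_fun hσ x
  have sub_mem (v : V) : v - σ (W.mkQ v) ∈ W := by
    rw [← Quotient.mk_eq_zero W, ← W.mkQ_apply, map_sub, mkQ_σ, sub_self]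
  have mkQ_add (w : W) (x : V ⧸ W) : W.mkQ (w + σ x) = x := by
    rw [map_add, mkQ_σ, (W.mkQ_apply w).trans ((Quotient.mk_eq_zero W).mpr w.2), zero_add]
  let e : {s : Fin d → V // LinearIndependent F (W.mkQ ∘ s)} ≃
      (Fin d → W) × {c : Fin d → V ⧸ W // LinearIndependent F c} :=
    { toFun s := (fun i => ⟨s.1 i - σ (W.mkQ (s.1 i)), sub_mem _⟩, ⟨W.mkQ ∘ s.1, s.2⟩)
      invFun p := ⟨fun i => p.1 i + σ (p.2.1 i), by
        convert p.2.2 using 1; ext i; exact mkQ_add _ _⟩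
      left_inv s := by ext i; simp
      right_inv p := by ext i <;> simp [mkQ_add] }
  rw [Nat.card_congr e, Nat.card_prod, Nat.card_fun, Nat.card_fin,
    natCard_eq_pow_finrank (K := F), Nat.card_eq_fintype_card (α := F), card_linearIndependent hd,
    ← pow_mul, mul_comm (finrank F W)]

theorem card_linearIndependent_mkQ_comp_span_eq {W U : Submodule F V} (hUW : U ⊓ W = ⊥)
    {d : ℕ} (hU : finrank F U = d) :
    Nat.card {s : Fin d → V // LinearIndependent F (W.mkQ ∘ s) ∧ span F (Set.range s) = U} =
      ∏ i : Fin d, (q ^ d - q ^ (i : ℕ)) := by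
  let e : {s : Fin d → V // (∀ i, s i ∈ U) ∧ LinearIndependent F s} ≃
      {s : Fin d → U // LinearIndependent F s} :=
    { toFun s := ⟨fun i => ⟨s.1 i, s.2.1 i⟩, s.2.2.of_comp U.subtype⟩
      invFun s := ⟨U.subtype ∘ s.1, fun i => (s.1 i).2, s.2.map' _ U.ker_subtype⟩
      left_inv _ := rfl
      right_inv _ := rfl }
  rw [Nat.card_congr
      (Equiv.subtypeEquivRight (linearIndependent_mkQ_comp_and_span_eq_iff hUW hU)),
    Nat.card_congr e, card_linearIndependent hU.ge, hU]

theorem card_finrank_eq_inf_eq_bot (W : Submodule F V) {d : ℕ}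
    (hd : d + finrank F W ≤ finrank F V) :
    Nat.card {U : Submodule F V // finrank F U = d ∧ U ⊓ W = ⊥} =
      q ^ (d * finrank F W) * gaussBinom q (finrank F V - finrank F W) d := by
  have hquot : finrank F (V ⧸ W) = finrank F V - finrank F W := by
    have := W.finrank_quotient_add_finrank
    omega
  let spanRange : {s : Fin d → V // LinearIndependent F (W.mkQ ∘ s)} →
      {U : Submodule F V // finrank F U = d ∧ U ⊓ W = ⊥} := fun s =>
    ⟨span F (Set.range s.1), by rw [finrank_span_eq_card (s.2.of_comp _), Fintype.card_fin],
      by simpa [disjoint_iff] using range_ker_disjoint s.2⟩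
  have hfiber (U : {U : Submodule F V // finrank F U = d ∧ U ⊓ W = ⊥}) :
      Nat.card {s // spanRange s = U} = ∏ i : Fin d, (q ^ d - q ^ (i : ℕ)) := by
    rw [← card_linearIndependent_mkQ_comp_span_eq U.2.2 U.2.1]
    exact Nat.card_congr ((Equiv.subtypeEquivRight fun _ => Subtype.ext_iff).trans
      (Equiv.subtypeSubtypeEquivSubtypeInter _ (fun s => span F (Set.range s) = U.1)))
  have hcount := card_linearIndependent_mkQ_comp W (d := d) (by omega)
  rw [Nat.card_eq_mul_of_card_fiber spanRange hfiber, hquot,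
    Fin.prod_univ_eq_prod_range (fun i => q ^ d - q ^ i),
    Fin.prod_univ_eq_prod_range (fun i => q ^ (finrank F V - finrank F W) - q ^ i),
    ← gaussBinom_mul_prod (m := finrank F V - finrank F W) Fintype.card_pos (by omega),
    ← mul_assoc] at hcount
  refine Nat.eq_of_mul_eq_mul_right (Finset.prod_pos fun i hi => ?_) hcount
  exact Nat.sub_pos_of_lt (Nat.pow_lt_pow_right Fintype.one_lt_card (Finset.mem_range.mp hi))

theorem card_finrank_eq_inf_eq {R W : Submodule F V} (hRW : R ≤ W) {d : ℕ}
    (hRd : finrank F R ≤ d) (hd : d - finrank F R ≤ finrank F V - finrank F W) :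
    Nat.card {Q : Submodule F V // finrank F Q = d ∧ Q ⊓ W = R} =
      q ^ ((d - finrank F R) * (finrank F W - finrank F R)) *
        gaussBinom q (finrank F V - finrank F W) (d - finrank F R) := by
  have : Finite (V ⧸ R) := Module.finite_of_finite F
  have comap_map {Q : Submodule F V} (hQ : R ≤ Q) : (Q.map R.mkQ).comap R.mkQ = Q := by
    rw [comap_map_mkQ, sup_eq_right.mpr hQ]
  have inf_eq_bot_iff (Q : Submodule F (V ⧸ R)) :
      Q ⊓ W.map R.mkQ = ⊥ ↔ Q.comap R.mkQ ⊓ W = R := by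
    rw [← (comap_injective_of_surjective R.mkQ_surjective).eq_iff, comap_inf, comap_map hRW,
      comap_bot, ker_mkQ]
  have hW := finrank_comap_mkQ R (W.map R.mkQ)
  have hV := R.finrank_quotient_add_finrank
  have hWV := W.finrank_le
  rw [comap_map hRW] at hW
  -- the subspaces meeting `W` exactly in `R` are the preimages of those of `V ⧸ R` avoiding `W ⧸ R`
  let e : {Q : Submodule F (V ⧸ R) // finrank F Q = d - finrank F R ∧ Q ⊓ W.map R.mkQ = ⊥} ≃
      {Q : Submodule F V // finrank F Q = d ∧ Q ⊓ W = R} :=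
    { toFun Q :=
        ⟨Q.1.comap R.mkQ, by rw [finrank_comap_mkQ, Q.2.1]; omega, (inf_eq_bot_iff _).mp Q.2.2⟩
      invFun Q :=
        have hRQ : R ≤ Q.1 := Q.2.2.ge.trans inf_le_left
        ⟨Q.1.map R.mkQ,
          by have := finrank_comap_mkQ R (Q.1.map R.mkQ); rw [comap_map hRQ, Q.2.1] at this; omega,
          (inf_eq_bot_iff _).mpr (by rw [comap_map hRQ, Q.2.2])⟩
      left_inv Q := Subtype.ext (map_comap_eq_of_surjective R.mkQ_surjective _)
      right_inv Q := Subtype.ext (comap_map (Q.2.2.ge.trans inf_le_left)) }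
  rw [← Nat.card_congr e, card_finrank_eq_inf_eq_bot _ (by omega),
    show finrank F (W.map R.mkQ) = finrank F W - finrank F R by omega,
    show finrank F (V ⧸ R) - (finrank F W - finrank F R) = finrank F V - finrank F W by omega]

theorem card_le_finrank_eq_inf_eq {R W U : Submodule F V} (hRW : R ≤ W) (hWU : W ≤ U) {d : ℕ}
    (hRd : finrank F R ≤ d) (hd : d - finrank F R ≤ finrank F U - finrank F W) :
    Nat.card {Q : Submodule F V // Q ≤ U ∧ finrank F Q = d ∧ Q ⊓ W = R} =
      q ^ ((d - finrank F R) * (finrank F W - finrank F R)) *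
        gaussBinom q (finrank F U - finrank F W) (d - finrank F R) := by
  have hR := (comapSubtypeEquivOfLe (hRW.trans hWU)).finrank_eq
  have hW := (comapSubtypeEquivOfLe hWU).finrank_eq
  let e : {Q : Submodule F U // finrank F Q = d ∧ Q ⊓ W.comap U.subtype = R.comap U.subtype} ≃
      {Q : Submodule F V // Q ≤ U ∧ finrank F Q = d ∧ Q ⊓ W = R} :=
    ((MapSubtype.orderIso U).toEquiv.subtypeEquiv fun Q => by
      change _ ↔ finrank F (Q.map U.subtype) = d ∧ Q.map U.subtype ⊓ W = R
      rw [inf_map_subtype_eq_iff (hRW.trans hWU), finrank_map_subtype_eq]).trans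
      (Equiv.subtypeSubtypeEquivSubtypeInter (· ≤ U) fun Q => finrank F Q = d ∧ Q ⊓ W = R)
  rw [← Nat.card_congr e, card_finrank_eq_inf_eq (comap_mono hRW) (by omega) (by omega), hR, hW]

end Counting

def flagCount (q s : ℕ) (k l : ℕ → ℕ) : ℕ :=
  gaussBinom q (k s) (l s) *
    ∏ j ∈ Finset.range s, q ^ ((l j - l (j + 1)) * (k (j + 1) - l (j + 1))) *
      gaussBinom q (k j - k (j + 1)) (l j - l (j + 1))

theorem flagCount_succ (q s : ℕ) (k l : ℕ → ℕ) :
    flagCount q (s + 1) k l =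
      q ^ ((l 0 - l 1) * (k 1 - l 1)) * gaussBinom q (k 0 - k 1) (l 0 - l 1) *
        flagCount q s (fun i => k (i + 1)) (fun i => l (i + 1)) := by
  simp only [flagCount, Finset.prod_range_succ']
  ring

section Flag

variable {F V : Type*} [Field F] [AddCommGroup V] [Module F V]

def IsFlagType (W : ℕ → Submodule F V) (s : ℕ) (l : ℕ → ℕ) (Q : Submodule F V) : Prop :=
  Q ≤ W 0 ∧ ∀ i ≤ s, finrank F ↥(Q ⊓ W i) = l i

theorem IsFlagType.finrank_eq {W : ℕ → Submodule F V} {s : ℕ} {l : ℕ → ℕ} {Q : Submodule F V}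
    (h : IsFlagType W s l Q) : finrank F Q = l 0 := by
  have h₀ := h.2 0 (Nat.zero_le s)
  rwa [inf_eq_left.mpr h.1] at h₀

theorem isFlagType_zero_iff {W : ℕ → Submodule F V} {l : ℕ → ℕ} {Q : Submodule F V} :
    IsFlagType W 0 l Q ↔ Q ≤ W 0 ∧ finrank F Q = l 0 := by
  refine ⟨fun h => ⟨h.1, h.finrank_eq⟩, fun ⟨hQ, hl⟩ => ⟨hQ, fun i hi => ?_⟩⟩
  rwa [Nat.le_zero.mp hi, inf_eq_left.mpr hQ]

theorem isFlagType_succ_iff {W : ℕ → Submodule F V} (hW : Antitone W) {s : ℕ} {l : ℕ → ℕ}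
    {Q : Submodule F V} :
    IsFlagType W (s + 1) l Q ↔ Q ≤ W 0 ∧ finrank F Q = l 0 ∧
      IsFlagType (fun i => W (i + 1)) s (fun i => l (i + 1)) (Q ⊓ W 1) := by
  have inf_shift (i : ℕ) : Q ⊓ W 1 ⊓ W (i + 1) = Q ⊓ W (i + 1) := by
    rw [inf_assoc, inf_eq_right.mpr (hW (Nat.le_add_left 1 i))]
  simp only [IsFlagType, inf_le_right, true_and]
  constructor
  · rintro ⟨hQ, h⟩
    refine ⟨hQ, IsFlagType.finrank_eq ⟨hQ, h⟩, fun i hi => ?_⟩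
    rw [inf_shift]
    exact h (i + 1) (by omega)
  · rintro ⟨hQ, h₀, h⟩
    refine ⟨hQ, fun i hi => ?_⟩
    cases i with
    | zero => rwa [inf_eq_left.mpr hQ]
    | succ i =>
      rw [← inf_shift]
      exact h i (by omega)

theorem isFlagType_and_le_iff {W : ℕ → Submodule F V} {s : ℕ} {l : ℕ → ℕ} {P Q : Submodule F V} :
    IsFlagType W s l Q ∧ Q ≤ P ↔ IsFlagType (fun i => P ⊓ W i) s l Q := by
  have inf_inf (hQ : Q ≤ P) (i : ℕ) : Q ⊓ (P ⊓ W i) = Q ⊓ W i := by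
    rw [← inf_assoc, inf_eq_left.mpr hQ]
  constructor
  · rintro ⟨⟨hQW, h⟩, hQP⟩
    refine ⟨le_inf hQP hQW, fun i hi => ?_⟩
    rw [inf_inf hQP]
    exact h i hi
  · rintro ⟨hQ, h⟩
    have hQP := hQ.trans inf_le_left
    refine ⟨⟨hQ.trans inf_le_right, fun i hi => ?_⟩, hQP⟩
    rw [← inf_inf hQP]
    exact h i hi

variable [Fintype F] [Finite V]

theorem card_isFlagType (s : ℕ) {W : ℕ → Submodule F V} (hW : Antitone W) {k l : ℕ → ℕ}
    (hk : ∀ i ≤ s, finrank F (W i) = k i)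
    (hl : ∀ i < s, l (i + 1) ≤ l i ∧ l i - l (i + 1) ≤ k i - k (i + 1)) (hs : l s ≤ k s) :
    Nat.card {Q // IsFlagType W s l Q} = flagCount (Fintype.card F) s k l := by
  induction s generalizing W k l with
  | zero =>
    have hk₀ := hk 0 le_rfl
    have e : {Q // IsFlagType W 0 l Q} ≃ {Q // Q ≤ W 0 ∧ finrank F Q = l 0 ∧ Q ⊓ ⊥ = ⊥} :=
      Equiv.subtypeEquivRight fun Q => by simp [isFlagType_zero_iff]
    rw [Nat.card_congr e,
      card_le_finrank_eq_inf_eq (U := W 0) (d := l 0) le_rfl bot_le (by simp) (by simp [hk₀, hs])]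
    simp [flagCount, hk₀]
  | succ s ih =>
    let restrict (Q : {Q // IsFlagType W (s + 1) l Q}) :
        {R // IsFlagType (fun i => W (i + 1)) s (fun i => l (i + 1)) R} :=
      ⟨Q.1 ⊓ W 1, ((isFlagType_succ_iff hW).mp Q.2).2.2⟩
    have hfiber (R : {R // IsFlagType (fun i => W (i + 1)) s (fun i => l (i + 1)) R}) :
        Nat.card {Q // restrict Q = R} = Fintype.card F ^ ((l 0 - l 1) * (k 1 - l 1)) *
          gaussBinom (Fintype.card F) (k 0 - k 1) (l 0 - l 1) := by
      have hR : finrank F R.1 = l 1 := R.2.finrank_eq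
      have hRW : R.1 ≤ W 1 := R.2.1
      have hl₀ : l 1 ≤ l 0 ∧ l 0 - l 1 ≤ k 0 - k 1 := hl 0 (Nat.succ_pos s)
      have hk₀ := hk 0 (Nat.zero_le _)
      have hk₁ := hk 1 (by omega)
      let e : {Q // restrict Q = R} ≃ {Q // Q ≤ W 0 ∧ finrank F Q = l 0 ∧ Q ⊓ W 1 = R.1} :=
        (Equiv.subtypeEquivRight fun _ => Subtype.ext_iff).trans
          ((Equiv.subtypeSubtypeEquivSubtypeInter (IsFlagType W (s + 1) l) (· ⊓ W 1 = R.1)).trans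
            (Equiv.subtypeEquivRight fun Q => by
              rw [isFlagType_succ_iff hW]
              constructor
              · rintro ⟨⟨hQ, hQl, -⟩, hQR⟩
                exact ⟨hQ, hQl, hQR⟩
              · rintro ⟨hQ, hQl, hQR⟩
                exact ⟨⟨hQ, hQl, hQR ▸ R.2⟩, hQR⟩))
      rw [Nat.card_congr e,
        card_le_finrank_eq_inf_eq hRW (hW (Nat.zero_le 1)) (by omega) (by omega), hR, hk₀, hk₁]
    rw [Nat.card_eq_mul_of_card_fiber restrict hfiber,
      ih (W := fun i => W (i + 1)) (k := fun i => k (i + 1)) (l := fun i => l (i + 1))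
        (fun i j hij => hW (by omega)) (fun i hi => hk (i + 1) (by omega))
        (fun i hi => hl (i + 1) (by omega)) hs, flagCount_succ]
    ring

end Flag

theorem lastSpan_zero (F : Type) [Field F] (N : ℕ) : lastSpan F N 0 = ⊤ := by
  rw [eq_top_iff, ← (Pi.basisFun F (Fin N)).span_eq]
  exact span_mono fun _ ⟨j, hj⟩ => ⟨j, Nat.zero_le _, by simp [← hj]⟩

theorem lastSpan_anti (F : Type) [Field F] (N : ℕ) {c c' : ℕ} (h : c ≤ c') :
    lastSpan F N c' ≤ lastSpan F N c :=
  span_mono fun _ ⟨j, hj, hv⟩ => ⟨j, h.trans hj, hv⟩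

/-- The subspace `E_{i+1}` of the informal statement (whose indices start at `1`). -/
def stdFlag (F : Type) [Field F] (t : ℕ) (n : ℕ → ℕ) (i : ℕ) :
    Submodule F (Fin (∑ m ∈ Finset.range t, n m) → F) :=
  lastSpan F (∑ m ∈ Finset.range t, n m) (∑ j ∈ Finset.range i, n j)

theorem stdFlag_zero (F : Type) [Field F] (t : ℕ) (n : ℕ → ℕ) : stdFlag F t n 0 = ⊤ := by
  rw [stdFlag, Finset.sum_range_zero, lastSpan_zero]

theorem stdFlag_antitone (F : Type) [Field F] (t : ℕ) (n : ℕ → ℕ) : Antitone (stdFlag F t n) :=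
  fun _ _ hij =>
    lastSpan_anti F _ (Finset.sum_le_sum_of_subset (Finset.range_subset_range.mpr hij))

theorem isTypeP_iff_isFlagType {F : Type} [Field F] {t : ℕ} {n k : ℕ → ℕ}
    {P : Submodule F (Fin (∑ m ∈ Finset.range t, n m) → F)} :
    IsTypeP F t n k P ↔ IsFlagType (stdFlag F t n) (t - 1) k P := by
  simp only [IsTypeP, IsFlagType, stdFlag_zero, le_top, true_and]
  constructor
  · rintro ⟨h₀, h⟩ (_ | i) hi
    · rwa [stdFlag_zero, inf_top_eq]
    · exact h (i + 1) (by omega) (by omega)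
  · intro h
    have h₀ := h 0 (Nat.zero_le _)
    rw [stdFlag_zero, inf_top_eq] at h₀
    exact ⟨h₀, fun i h₁ hi => h i (by omega)⟩

theorem stmt9_general {F : Type} [Field F] [Fintype F] (q t : ℕ) (n k l : ℕ → ℕ)
    (hq : Fintype.card F = q)
    (h : ∀ i < t - 1, l (i + 1) ≤ l i ∧ l i - l (i + 1) ≤ k i - k (i + 1) ∧
      k (i + 1) ≤ k i ∧ k i - k (i + 1) ≤ n i)
    (hlast : l (t - 1) ≤ k (t - 1) ∧ k (t - 1) ≤ n (t - 1))
    (P : Submodule F (Fin (∑ m ∈ Finset.range t, n m) → F)) (hP : IsTypeP F t n k P) :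
    Nat.card {Q : Submodule F (Fin (∑ m ∈ Finset.range t, n m) → F) //
        IsTypeP F t n l Q ∧ Q ≤ P} =
      gaussBinom q (k (t - 1)) (l (t - 1)) *
        ∏ j ∈ Finset.range (t - 1),
          q ^ ((l j - l (j + 1)) * (k (j + 1) - l (j + 1))) *
            gaussBinom q (k j - k (j + 1)) (l j - l (j + 1)) := by
  subst hq
  have hW : Antitone fun i => P ⊓ stdFlag F t n i :=
    fun _ _ hij => inf_le_inf_left P (stdFlag_antitone F t n hij)
  rw [Nat.card_congr (Equiv.subtypeEquivRight fun Q => by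
      rw [isTypeP_iff_isFlagType, isFlagType_and_le_iff]),
    card_isFlagType (t - 1) hW (isTypeP_iff_isFlagType.mp hP).2
      (fun i hi => ⟨(h i hi).1, (h i hi).2.1⟩) hlast.1]
  rfl

/-- The number of subspaces of type `(l 0, …, l (t-1))` contained in a fixed subspace `P`
of type `(k 0, …, k (t-1))`. -/
theorem stmt9 {F : Type} [Field F] [Fintype F] (q t : ℕ) (ht : 1 ≤ t) (n k l : ℕ → ℕ)
    (hq : Fintype.card F = q)
    (h : ∀ i < t - 1, l (i + 1) ≤ l i ∧ l i - l (i + 1) ≤ k i - k (i + 1) ∧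
      k (i + 1) ≤ k i ∧ k i - k (i + 1) ≤ n i)
    (hlast : l (t - 1) ≤ k (t - 1) ∧ k (t - 1) ≤ n (t - 1))
    (P : Submodule F (Fin (∑ m ∈ Finset.range t, n m) → F)) (hP : IsTypeP F t n k P) :
    Nat.card {Q : Submodule F (Fin (∑ m ∈ Finset.range t, n m) → F) //
        IsTypeP F t n l Q ∧ Q ≤ P} =
      gaussBinom q (k (t - 1)) (l (t - 1)) *
        ∏ j ∈ Finset.range (t - 1),
          q ^ ((l j - l (j + 1)) * (k (j + 1) - l (j + 1))) *
            gaussBinom q (k j - k (j + 1)) (l j - l (j + 1)) :=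
  stmt9_general q t n k l hq h hlast P hP
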